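/- Let g be an element of the first Grigorchuk group G and let n ∈ ℕ satisfy n ≥ ⌈log₂ |g|_S⌉ + 2. Then g fixes the vertex ρ_n = 1^n if and only if g fixes the boundary point ρ = 1^∞ ∈ {0,1}^ℕ (under the continuous extension of the action of G to the boundary ∂T = {0,1}^ℕ of T). -/

import Mathlib

noncomputable section

/-! ### The Grigorchuk generators -/

namespace Grig

def aFun : List Bool → List Bool
  | [] => []
  | x :: w => (!x) :: w

mutual
  def bFun : List Bool → List Bool
    | [] => []
    | false :: w => false :: aFun w
    | true :: w => true :: cFun w
  def cFun : List Bool → List Bool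
    | [] => []
    | false :: w => false :: aFun w
    | true :: w => true :: dFun w
  def dFun : List Bool → List Bool
    | [] => []
    | false :: w => false :: w
    | true :: w => true :: bFun w
end

theorem aFun_involutive : Function.Involutive aFun := by
  intro w
  match w with
  | [] => rfl
  | x :: w => simp [aFun]

theorem bcd_involutive :
    ∀ w : List Bool, bFun (bFun w) = w ∧ cFun (cFun w) = w ∧ dFun (dFun w) = w := by
  intro w
  induction w with
  | nil => exact ⟨rfl, rfl, rfl⟩
  | cons x w ih =>
    rcases x with _ | _
    · simp [bFun, cFun, dFun, aFun_involutive w]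
    · simp [bFun, cFun, dFun, ih.1, ih.2.1, ih.2.2]

theorem bFun_involutive : Function.Involutive bFun := fun w => (bcd_involutive w).1
theorem cFun_involutive : Function.Involutive cFun := fun w => (bcd_involutive w).2.1
theorem dFun_involutive : Function.Involutive dFun := fun w => (bcd_involutive w).2.2

theorem aFun_length : ∀ w : List Bool, (aFun w).length = w.length := by
  intro w
  match w with
  | [] => rfl
  | x :: w => simp [aFun]

theorem bcd_length : ∀ w : List Bool,
    (bFun w).length = w.length ∧ (cFun w).length = w.length ∧ (dFun w).length = w.length := by
  intro w
  induction w with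
  | nil => exact ⟨rfl, rfl, rfl⟩
  | cons x w ih =>
    rcases x with _ | _
    · simp [bFun, cFun, dFun, aFun_length w]
    · simp [bFun, cFun, dFun, ih.1, ih.2.1, ih.2.2]

theorem bFun_length : ∀ w, (bFun w).length = w.length := fun w => (bcd_length w).1
theorem cFun_length : ∀ w, (cFun w).length = w.length := fun w => (bcd_length w).2.1
theorem dFun_length : ∀ w, (dFun w).length = w.length := fun w => (bcd_length w).2.2

/-- The generators of the first Grigorchuk group as permutations of the vertex set
`{0,1}*` of the rooted binary tree. -/
def aPerm : Equiv.Perm (List Bool) := aFun_involutive.toPerm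
def bPerm : Equiv.Perm (List Bool) := bFun_involutive.toPerm
def cPerm : Equiv.Perm (List Bool) := cFun_involutive.toPerm
def dPerm : Equiv.Perm (List Bool) := dFun_involutive.toPerm

/-- The generating set `S = {a, b, c, d}` (a set of involutions). -/
def Sset : Set (Equiv.Perm (List Bool)) := {aPerm, bPerm, cPerm, dPerm}

/-- The first Grigorchuk group. -/
def Grigorchuk : Subgroup (Equiv.Perm (List Bool)) := Subgroup.closure Sset

/-- Word length with respect to `S = {a, b, c, d}`. -/
def wordLength (g : Equiv.Perm (List Bool)) : ℕ :=
  sInf {k | ∃ l : List (Equiv.Perm (List Bool)),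
    (∀ x ∈ l, x ∈ Sset) ∧ l.length = k ∧ l.prod = g}

/-- The growth function of the first Grigorchuk group with respect to `S`. -/
def growthGrig (m : ℕ) : ℕ :=
  Nat.card {g : Equiv.Perm (List Bool) |
    ∃ l : List (Equiv.Perm (List Bool)), (∀ x ∈ l, x ∈ Sset) ∧ l.length ≤ m ∧ l.prod = g}

/-! ### Level transfer -/

def levelFun (n : ℕ) (f : List Bool → List Bool) (v : Fin n → Bool) : Fin n → Bool :=
  fun i => (f (List.ofFn v)).getD i false

theorem levelFun_involutive (n : ℕ) (f : List Bool → List Bool)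
    (hlen : ∀ l, (f l).length = l.length) (hinv : Function.Involutive f) :
    Function.Involutive (levelFun n f) := by
  intro v
  have key : ∀ u : Fin n → Bool, List.ofFn (levelFun n f u) = f (List.ofFn u) := by
    intro u
    apply List.ext_getElem
    · simp [hlen]
    · intro i h1 h2
      simp only [List.getElem_ofFn]
      simp [levelFun, List.getD_eq_getElem, h2]
  funext i
  simp only [levelFun, key v, hinv (List.ofFn v)]
  simp [List.getD_eq_getElem]

/-- The images `a_n, b_n, c_n, d_n` of the Grigorchuk generators in `Sym(X_n)`,
where the `n`-th level `X_n = {0,1}^n` is identified with `Fin n → Bool`. -/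
def aLev (n : ℕ) : Equiv.Perm (Fin n → Bool) :=
  (levelFun_involutive n aFun aFun_length aFun_involutive).toPerm
def bLev (n : ℕ) : Equiv.Perm (Fin n → Bool) :=
  (levelFun_involutive n bFun bFun_length bFun_involutive).toPerm
def cLev (n : ℕ) : Equiv.Perm (Fin n → Bool) :=
  (levelFun_involutive n cFun cFun_length cFun_involutive).toPerm
def dLev (n : ℕ) : Equiv.Perm (Fin n → Bool) :=
  (levelFun_involutive n dFun dFun_length dFun_involutive).toPerm

end Grig

/-! ### The boundary action and actions of words -/

/-- The (continuous extension to the boundary `∂T = {0,1}^ℕ` of the) action of a tree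
automorphism on the boundary of the rooted binary tree. -/
def boundaryAct (g : Equiv.Perm (List Bool)) (ξ : ℕ → Bool) : ℕ → Bool :=
  fun n => (g (List.ofFn fun i : Fin (n + 1) => ξ i)).getD n false

/-- Applying a word of generators to a vertex, letter by letter: the right action of the
word `l` (the generators in `S` are involutions). -/
def wordApply (l : List (Equiv.Perm (List Bool))) (v : List Bool) : List Bool :=
  l.foldl (fun v s => s v) v

/-- The right action of a word on a boundary point. -/
def wordApplyB (l : List (Equiv.Perm (List Bool))) (ξ : ℕ → Bool) : ℕ → Bool :=
  l.foldl (fun ξ s => boundaryAct s ξ) ξ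

/-- The boundary point `ρ = 1^∞`. -/
def rhoInf : ℕ → Bool := fun _ => true

/-- The vertex `ρ_n = 1^n` of the `n`-th level. -/
def rhoVertex (n : ℕ) : List Bool := List.replicate n true

/-- The vertex `η_n = 1^{n-1}0` of the `n`-th level. -/
def etaVertex (n : ℕ) : List Bool := List.replicate (n - 1) true ++ [false]

/-!
Write `g` as a word of length `L = |g|_S` in `a, b, c, d`. Freely reducing with `a² = 1` and the
Klein four-group relations among `b, c, d` yields an alternating word, of which at most half the
letters are among `b, c, d`; only those letters contribute to the section at the vertex `1`. So the
reduced section of `g` at `1^k` has length at most `L / 2^k + 1`, which is at most one at depth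
`K = ⌈log₂ L⌉ + 1`. If `g` fixes `1^n` with `n > K`, that section fixes the vertex `1`, so it is
trivial or one of `b, c, d`; these fix the whole ray, hence so does `g`.
-/

namespace Grig

inductive Gen
  | A | B | C | D

namespace Gen

def act : Gen → List Bool → List Bool
  | A => aFun
  | B => bFun
  | C => cFun
  | D => dFun

def toPerm : Gen → Equiv.Perm (List Bool)
  | A => aPerm
  | B => bPerm
  | C => cPerm
  | D => dPerm

def isA : Gen → Bool
  | A => true
  | _ => false

def out : Gen → Bool → Bool
  | A, y => !y
  | _, y => y

def sec : Gen → Bool → List Gen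
  | A, _ => []
  | B, false => [A]
  | B, true => [C]
  | C, false => [A]
  | C, true => [D]
  | D, false => []
  | D, true => [B]

/-- `a² = 1`, and `{1, b, c, d}` is a Klein four-group. -/
def merge : Gen → Gen → Option (List Gen)
  | A, A | B, B | C, C | D, D => some []
  | B, C | C, B => some [D]
  | B, D | D, B => some [C]
  | C, D | D, C => some [B]
  | _, _ => none

end Gen

def evalWord (l : List Gen) (v : List Bool) : List Bool := l.foldr Gen.act v

@[simp] theorem evalWord_nil (v : List Bool) : evalWord [] v = v := rfl

@[simp] theorem evalWord_cons (g : Gen) (l : List Gen) (v : List Bool) :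
    evalWord (g :: l) v = g.act (evalWord l v) := rfl

theorem evalWord_append (u l : List Gen) (v : List Bool) :
    evalWord (u ++ l) v = evalWord u (evalWord l v) :=
  List.foldr_append

theorem Gen.act_nil (g : Gen) : g.act [] = [] := by
  cases g <;> rfl

theorem evalWord_nil_right (l : List Gen) : evalWord l [] = [] := by
  induction l with
  | nil => rfl
  | cons g l ih => simp [ih, Gen.act_nil]

theorem coe_prod_map_toPerm (l : List Gen) : ⇑(l.map Gen.toPerm).prod = evalWord l := by
  induction l with
  | nil => rfl
  | cons g l ih =>
    funext v
    cases g <;> simp [ih] <;> rfl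

theorem Sset_eq_range_toPerm : Sset = Set.range Gen.toPerm := by
  ext x
  constructor
  · rintro (rfl | rfl | rfl | rfl)
    exacts [⟨.A, rfl⟩, ⟨.B, rfl⟩, ⟨.C, rfl⟩, ⟨.D, rfl⟩]
  · rintro ⟨_ | _ | _ | _, rfl⟩ <;> simp [Sset, Gen.toPerm]

theorem Gen.toPerm_mul_self (g : Gen) : g.toPerm * g.toPerm = 1 := by
  ext1 v
  cases g
  exacts [aFun_involutive v, bFun_involutive v, cFun_involutive v, dFun_involutive v]

theorem exists_word_length_eq_wordLength {g : Equiv.Perm (List Bool)} (hg : g ∈ Grigorchuk) :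
    ∃ l : List Gen, l.length = wordLength g ∧ evalWord l = ⇑g := by
  have hfin : ∀ x ∈ Sset, IsOfFinOrder x := by
    rw [Sset_eq_range_toPerm]
    rintro _ ⟨γ, rfl⟩
    exact isOfFinOrder_iff_pow_eq_one.2 ⟨2, two_pos, by rw [sq, γ.toPerm_mul_self]⟩
  have hmon : g ∈ Submonoid.closure Sset := by
    rw [← Subgroup.closure_toSubmonoid_of_isOfFinOrder hfin]
    exact hg
  obtain ⟨l, hlS, hl⟩ := Submonoid.exists_list_of_mem_closure hmon
  obtain ⟨l₀, hl₀S, hl₀len, hl₀⟩ : wordLength g ∈ {k | ∃ l : List (Equiv.Perm (List Bool)),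
      (∀ x ∈ l, x ∈ Sset) ∧ l.length = k ∧ l.prod = g} :=
    Nat.sInf_mem ⟨l.length, l, hlS, rfl, hl⟩
  obtain ⟨w, rfl⟩ : l₀ ∈ Set.range (List.map Gen.toPerm) := by
    rw [Set.range_list_map, ← Sset_eq_range_toPerm]
    exact hl₀S
  exact ⟨w, by simpa using hl₀len, by rw [← coe_prod_map_toPerm, hl₀]⟩

theorem bcd_mul (w : List Bool) :
    bFun (cFun w) = dFun w ∧ cFun (bFun w) = dFun w ∧ bFun (dFun w) = cFun w ∧
      dFun (bFun w) = cFun w ∧ cFun (dFun w) = bFun w ∧ dFun (cFun w) = bFun w := by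
  induction w with
  | nil => exact ⟨rfl, rfl, rfl, rfl, rfl, rfl⟩
  | cons x w ih =>
    cases x
    · simp [bFun, cFun, dFun, aFun_involutive w]
    · simp [bFun, cFun, dFun, ih]

namespace Gen

theorem evalWord_merge {g h : Gen} {u : List Gen} (hu : g.merge h = some u) (w : List Bool) :
    evalWord u w = g.act (h.act w) := by
  obtain ⟨hbc, hcb, hbd, hdb, hcd, hdc⟩ := bcd_mul w
  cases g <;> cases h <;> simp only [merge, Option.some.injEq, reduceCtorEq] at hu <;> subst hu <;>
    simp [act, aFun_involutive w, bFun_involutive w, cFun_involutive w, dFun_involutive w, *]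

theorem merge_eq_none_iff {g h : Gen} : g.merge h = none ↔ g.isA ≠ h.isA := by
  cases g <;> cases h <;> simp [merge, isA]

end Gen

def Alternating (l : List Gen) : Prop := l.IsChain fun x y => x.isA ≠ y.isA

theorem Alternating.merge_append {g h : Gen} {u t : List Gen} (hu : g.merge h = some u)
    (ht : Alternating (h :: t)) : Alternating (u ++ t) := by
  have htail : Alternating t := ht.tail
  cases g <;> cases h <;> simp only [Gen.merge, Option.some.injEq, reduceCtorEq] at hu <;>
    subst hu <;> first
      | exact htail
      | (rcases t with _ | ⟨x, t⟩
         · exact List.isChain_singleton _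
         · exact List.isChain_cons_cons.2 ⟨(List.isChain_cons_cons.1 ht).1, htail⟩)

def reduceCons (g : Gen) : List Gen → List Gen
  | [] => [g]
  | h :: t =>
    match g.merge h with
    | some u => u ++ t
    | none => g :: h :: t

def reduce (l : List Gen) : List Gen := l.foldr reduceCons []

theorem evalWord_reduceCons (g : Gen) (l : List Gen) (w : List Bool) :
    evalWord (reduceCons g l) w = g.act (evalWord l w) := by
  rcases l with _ | ⟨h, t⟩
  · rfl
  · rcases hu : g.merge h with _ | u
    · simp [reduceCons, hu]
    · simp [reduceCons, hu, evalWord_append, Gen.evalWord_merge hu]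

theorem length_reduceCons_le (g : Gen) (l : List Gen) :
    (reduceCons g l).length ≤ l.length + 1 := by
  rcases l with _ | ⟨h, t⟩
  · rfl
  · rcases hu : g.merge h with _ | u
    · simp [reduceCons, hu]
    · have hu1 : u.length ≤ 1 := by
        cases g <;> cases h <;> simp only [Gen.merge, Option.some.injEq, reduceCtorEq] at hu <;>
          simp [← hu]
      simp [reduceCons, hu]
      omega

theorem Alternating.reduceCons (g : Gen) {l : List Gen} (hl : Alternating l) :
    Alternating (reduceCons g l) := by
  rcases l with _ | ⟨h, t⟩
  · exact List.isChain_singleton g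
  · rcases hu : g.merge h with _ | u
    · simpa [Grig.reduceCons, hu, Alternating, Gen.merge_eq_none_iff.1 hu] using hl
    · simpa [Grig.reduceCons, hu] using hl.merge_append hu

theorem evalWord_reduce (l : List Gen) : evalWord (reduce l) = evalWord l := by
  funext w
  induction l with
  | nil => rfl
  | cons g l ih => simp [reduce, evalWord_reduceCons, ← ih]

theorem length_reduce_le (l : List Gen) : (reduce l).length ≤ l.length := by
  induction l with
  | nil => rfl
  | cons g l ih => exact (length_reduceCons_le g (reduce l)).trans (Nat.succ_le_succ ih)

theorem alternating_reduce (l : List Gen) : Alternating (reduce l) := by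
  induction l with
  | nil => exact List.isChain_nil
  | cons g l ih => exact ih.reduceCons g

theorem Alternating.countP_not_isA_le :
    ∀ {l : List Gen}, Alternating l → l.countP (fun g => !g.isA) ≤ (l.length + 1) / 2
  | [], _ => le_rfl
  | [g], _ => by cases g <;> simp [Gen.isA]
  | g :: h :: t, hl => by
    have hgh : g.isA ≠ h.isA := (List.isChain_cons_cons.1 hl).1
    have ih : t.countP (fun g => !g.isA) ≤ (t.length + 1) / 2 :=
      Alternating.countP_not_isA_le (List.isChain_cons_cons.1 hl).2.tail
    have hpair : (if (!g.isA) = true then 1 else 0) + (if (!h.isA) = true then 1 else 0) = 1 := by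
      revert hgh
      cases g.isA <;> cases h.isA <;> decide
    simp only [List.countP_cons, List.length_cons]
    omega

theorem Gen.act_cons (g : Gen) (y : Bool) (w : List Bool) :
    g.act (y :: w) = g.out y :: evalWord (g.sec y) w := by
  cases g <;> cases y <;> rfl

theorem Gen.length_sec_le (g : Gen) (y : Bool) :
    (g.sec y).length ≤ if (!g.isA) = true then 1 else 0 := by
  cases g <;> cases y <;> simp [sec, isA]

/-- The image of the first letter `x` under a word, and the section of the word at `x`. -/
def split (l : List Gen) (x : Bool) : Bool × List Gen :=
  l.foldr (fun g p => (g.out p.1, g.sec p.1 ++ p.2)) (x, [])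

theorem evalWord_cons_eq_split (l : List Gen) (x : Bool) (w : List Bool) :
    evalWord l (x :: w) = (split l x).1 :: evalWord (split l x).2 w := by
  induction l with
  | nil => rfl
  | cons g l ih => simp [split, ih, Gen.act_cons, evalWord_append]

theorem length_split_le (l : List Gen) (x : Bool) :
    (split l x).2.length ≤ l.countP (fun g => !g.isA) := by
  induction l with
  | nil => simp [split]
  | cons g l ih =>
    have hsec := g.length_sec_le (split l x).1
    simp only [split, List.foldr_cons, List.length_append, List.countP_cons] at ih hsec ⊢
    omega

/-- `raySection l k` is a reduced word for the section of `l` at the vertex `1^k`, and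
`rayImage l k` is the last letter of the image of `1^(k+1)`. -/
def raySection (l : List Gen) : ℕ → List Gen
  | 0 => reduce l
  | k + 1 => reduce (split (raySection l k) true).2

def rayImage (l : List Gen) (k : ℕ) : Bool := (split (raySection l k) true).1

theorem evalWord_raySection_replicate (l : List Gen) (k m : ℕ) :
    evalWord (raySection l k) (List.replicate m true) = (List.range' k m).map (rayImage l) := by
  induction m generalizing k with
  | zero => exact evalWord_nil_right _
  | succ m ih =>
    rw [List.replicate_succ, evalWord_cons_eq_split, List.range'_succ, List.map_cons, ← ih]
    simp [raySection, rayImage, evalWord_reduce]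

theorem evalWord_replicate_true (l : List Gen) (m : ℕ) :
    evalWord l (List.replicate m true) = (List.range m).map (rayImage l) := by
  rw [List.range_eq_range', ← evalWord_raySection_replicate, raySection, evalWord_reduce]

theorem length_raySection_succ_le (l : List Gen) (k : ℕ) :
    (raySection l (k + 1)).length ≤ ((raySection l k).length + 1) / 2 :=
  calc (raySection l (k + 1)).length ≤ (split (raySection l k) true).2.length := length_reduce_le _
    _ ≤ (raySection l k).countP (fun g => !g.isA) := length_split_le _ _
    _ ≤ ((raySection l k).length + 1) / 2 := by
      cases k <;> exact (alternating_reduce _).countP_not_isA_le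

theorem length_raySection_le (l : List Gen) (k : ℕ) :
    (raySection l k).length ≤ l.length / 2 ^ k + 1 := by
  induction k with
  | zero => simpa [raySection] using (length_reduce_le l).trans (Nat.le_succ _)
  | succ k ih =>
    have hstep := length_raySection_succ_le l k
    rw [pow_succ, ← Nat.div_div_eq_div_mul]
    omega

/-- Once the section along the ray is trivial or a single letter among `b, c, d`, it cycles
through `b ↦ c ↦ d ↦ b` and fixes the whole ray. -/
theorem ray_step_of_length_le_one {w : List Gen} (hw : w.length ≤ 1)
    (hout : (split w true).1 = true) :
    (reduce (split w true).2).length ≤ 1 ∧ (split (reduce (split w true).2) true).1 = true := by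
  rcases w with _ | ⟨g, _ | ⟨h, t⟩⟩
  · decide
  · revert hout
    cases g <;> decide
  · simp at hw

theorem rayImage_eq_true_of_le {l : List Gen} {K : ℕ} (hshort : (raySection l K).length ≤ 1)
    (hK : rayImage l K = true) {k : ℕ} (hk : K ≤ k) : rayImage l k = true := by
  suffices ∀ k, K ≤ k → (raySection l k).length ≤ 1 ∧ rayImage l k = true from (this k hk).2
  intro k hk
  induction k, hk using Nat.le_induction with
  | base => exact ⟨hshort, hK⟩
  | succ k _ ih => exact ray_step_of_length_le_one ih.1 ih.2

theorem evalWord_replicate_eq_iff (l : List Gen) (n : ℕ) :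
    evalWord l (List.replicate n true) = List.replicate n true ↔ ∀ k < n, rayImage l k = true := by
  simp [evalWord_replicate_true, List.eq_replicate_iff]

theorem boundaryAct_apply_rhoInf {g : Equiv.Perm (List Bool)} {l : List Gen}
    (hl : evalWord l = ⇑g) (k : ℕ) : boundaryAct g rhoInf k = rayImage l k := by
  have hrho : (List.ofFn fun i : Fin (k + 1) => rhoInf i) = List.replicate (k + 1) true :=
    List.ofFn_const _ _
  simp only [boundaryAct, hrho, ← hl, evalWord_replicate_true]
  simp [List.getD_eq_getElem?_getD]

end Grig

/-- For `g ∈ 𝒢` and `n ≥ ⌈log₂ |g|_S⌉ + 2`, the element `g` fixes the vertex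
`ρ_n = 1^n` if and only if it fixes the boundary point `ρ = 1^∞`. -/
theorem grigorchuk_fixation_transfer (g : Equiv.Perm (List Bool))
    (hg : g ∈ Grig.Grigorchuk) (n : ℕ) (hn : Nat.clog 2 (Grig.wordLength g) + 2 ≤ n) :
    g (List.replicate n true) = List.replicate n true ↔
      boundaryAct g rhoInf = rhoInf := by
  obtain ⟨l, hlen, hl⟩ := Grig.exists_word_length_eq_wordLength hg
  set K := Nat.clog 2 (Grig.wordLength g) + 1
  have hshort : (Grig.raySection l K).length ≤ 1 := by
    have hlt : l.length < 2 ^ K :=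
      hlen ▸ (Nat.le_pow_clog one_lt_two _).trans_lt (Nat.pow_lt_pow_succ one_lt_two)
    simpa [Nat.div_eq_of_lt hlt] using Grig.length_raySection_le l K
  rw [← hl, Grig.evalWord_replicate_eq_iff, funext_iff]
  simp only [Grig.boundaryAct_apply_rhoInf hl, rhoInf]
  refine ⟨fun hfix k => ?_, fun hray k _ => hray k⟩
  rcases lt_or_ge k K with hk | hk
  · exact hfix k (by omega)
  · exact Grig.rayImage_eq_true_of_le hshort (hfix K (by omega)) hk

end
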